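/- arXiv:1607.04240 — 3 statements merged into one kernel-verified Lean document; each statement's English description precedes it below -/
import Mathlib

section
/- There exists a Borel probability measure P on [0,1]² whose marginal on the first coordinate is Lebesgue measure, such that for the point x = 0 the conditional probabilities of the upper half oscillate: the ratio P([0, 2^{-n}] × [1/2, 1]) / P([0, 2^{-n}] × [0,1]) equals 2/3 for even n and 1/3 for odd n (for all n ≥ 1), and hence the limit as n → ∞ does not exist. -/
open MeasureTheory Set Filter Topology

noncomputable section

/-- The union of dyadic strips `(2^{-2k-1}, 2^{-2k}]`. -/
def Eset : Set ℝ := ⋃ k : ℕ, Ioc ((2:ℝ) ^ (-(2*(k:ℤ)+1))) ((2:ℝ) ^ (-(2*(k:ℤ))))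

lemma measurableSet_Eset : MeasurableSet Eset :=
  MeasurableSet.iUnion fun _ => measurableSet_Ioc

/-- `ff` is `3/4` on `Eset`, `1/4` elsewhere. -/
def ff : ℝ → ℝ := fun x => Eset.indicator (fun _ => (1/2 : ℝ)) x + 1/4

lemma measurable_ff : Measurable ff :=
  (measurable_const.indicator measurableSet_Eset).add measurable_const

lemma ff_mem_Icc (x : ℝ) : ff x ∈ Icc (0:ℝ) 1 := by
  unfold ff
  by_cases h : x ∈ Eset
  · rw [Set.indicator_of_mem h]; norm_num
  · rw [Set.indicator_of_notMem h]; norm_num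

lemma ff_preimage_upper : ff ⁻¹' Icc (1/2 : ℝ) 1 = Eset := by
  ext x
  simp only [mem_preimage, mem_Icc]
  unfold ff
  by_cases h : x ∈ Eset
  · rw [Set.indicator_of_mem h]; simp [h]; norm_num
  · rw [Set.indicator_of_notMem h]; simp [h]; norm_num

lemma term_eq (K j : ℕ) :
    (2:ℝ) ^ (-(2*((j:ℤ)+K))) - (2:ℝ) ^ (-(2*((j:ℤ)+K)+1))
      = (2:ℝ) ^ (-(2*(K:ℤ))-1) * (1/4)^j := by
  have h2 : (2:ℝ) ≠ 0 := two_ne_zero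
  have e1 : (-(2*((j:ℤ)+K)+1)) = (-(2*(K:ℤ))-1) + (-2)*(j:ℤ) := by ring
  have e0 : (-(2*((j:ℤ)+K))) = (-(2*(K:ℤ))) + (-2)*(j:ℤ) := by ring
  rw [e1, e0, zpow_add₀ h2, zpow_add₀ h2]
  have h4 : (2:ℝ) ^ ((-2 : ℤ)*(j:ℤ)) = (1/4 : ℝ)^j := by
    rw [zpow_mul, zpow_natCast]
    norm_num
  rw [h4]
  have : (2:ℝ) ^ (-(2*(K:ℤ))) = 2 * (2:ℝ) ^ (-(2*(K:ℤ))-1) := by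
    rw [← zpow_one_add₀ h2]; ring_nf
  rw [this]; ring

lemma summable_terms (K : ℕ) :
    Summable (fun j : ℕ => (2:ℝ) ^ (-(2*((j:ℤ)+K))) - (2:ℝ) ^ (-(2*((j:ℤ)+K)+1))) := by
  simp only [term_eq]
  exact (summable_geometric_of_lt_one (by norm_num) (by norm_num)).mul_left _

lemma tsum_terms (K : ℕ) :
    ∑' j : ℕ, ((2:ℝ) ^ (-(2*((j:ℤ)+K))) - (2:ℝ) ^ (-(2*((j:ℤ)+K)+1)))
      = (2/3) * (2:ℝ) ^ (-(2*(K:ℤ))) := by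
  simp only [term_eq]
  rw [tsum_mul_left, tsum_geometric_of_lt_one (by norm_num) (by norm_num)]
  have h2 : (2:ℝ) ≠ 0 := two_ne_zero
  have : (2:ℝ) ^ (-(2*(K:ℤ))-1) = (2:ℝ) ^ (-(2*(K:ℤ))) / 2 := by
    rw [zpow_sub₀ h2]; norm_num
  rw [this]; ring_nf

/-- Decomposition of `Icc 0 2^{-n} ∩ Eset` as a disjoint union of strips. -/
lemma inter_eq_iUnion (n K : ℕ) (h1 : n ≤ 2*K) (h2 : 2*K ≤ n+1) :
    Icc (0:ℝ) (2 ^ (-(n:ℤ))) ∩ Eset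
      = ⋃ j : ℕ, Ioc ((2:ℝ) ^ (-(2*((j:ℤ)+K)+1))) ((2:ℝ) ^ (-(2*((j:ℤ)+K)))) := by
  ext x
  simp only [Eset, mem_inter_iff, mem_Icc, mem_iUnion, mem_Ioc]
  constructor
  · rintro ⟨⟨hx0, hxn⟩, k, hk1, hk2⟩
    have hKk : K ≤ k := by
      by_contra hlt
      push_neg at hlt
      have hle : (2:ℤ)*k + 1 ≤ (n:ℤ) := by
        have : 2*k + 2 ≤ 2*K := by omega
        omega
      have : (2:ℝ) ^ (-(n:ℤ)) ≤ (2:ℝ) ^ (-(2*(k:ℤ)+1)) :=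
        zpow_le_zpow_right₀ one_le_two (by omega)
      linarith
    refine ⟨k - K, ?_, ?_⟩
    · have : ((k - K : ℕ) : ℤ) + K = k := by omega
      rw [this]; exact hk1
    · have : ((k - K : ℕ) : ℤ) + K = k := by omega
      rw [this]; exact hk2
  · rintro ⟨j, hj1, hj2⟩
    have hpos : (0:ℝ) < (2:ℝ) ^ (-(2*((j:ℤ)+K)+1)) := by positivity
    have hle : (2:ℝ) ^ (-(2*((j:ℤ)+K))) ≤ (2:ℝ) ^ (-(n:ℤ)) :=
      zpow_le_zpow_right₀ one_le_two (by omega)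
    refine ⟨⟨le_of_lt (lt_of_lt_of_le hpos (le_of_lt hj1)), le_trans hj2 hle⟩, j + K, ?_, ?_⟩
    · have : ((j + K : ℕ) : ℤ) = (j:ℤ) + K := by push_cast; ring
      rw [this]; exact hj1
    · have : ((j + K : ℕ) : ℤ) = (j:ℤ) + K := by push_cast; ring
      rw [this]; exact hj2

lemma pairwise_disjoint_strips (K : ℕ) :
    Pairwise (Function.onFun Disjoint
      (fun j : ℕ => Ioc ((2:ℝ) ^ (-(2*((j:ℤ)+K)+1))) ((2:ℝ) ^ (-(2*((j:ℤ)+K)))))) := by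
  have key : ∀ i j : ℕ, i < j →
      Disjoint (Ioc ((2:ℝ) ^ (-(2*((i:ℤ)+K)+1))) ((2:ℝ) ^ (-(2*((i:ℤ)+K)))))
        (Ioc ((2:ℝ) ^ (-(2*((j:ℤ)+K)+1))) ((2:ℝ) ^ (-(2*((j:ℤ)+K))))) := by
    intro i j hij
    rw [Set.Ioc_disjoint_Ioc]
    have : (2:ℝ) ^ (-(2*((j:ℤ)+K))) ≤ (2:ℝ) ^ (-(2*((i:ℤ)+K)+1)) :=
      zpow_le_zpow_right₀ one_le_two (by omega)
    exact le_trans (min_le_right _ _) (le_trans this (le_max_left _ _))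
  intro i j hij
  rcases lt_or_gt_of_ne hij with h | h
  · exact key i j h
  · exact (key j i h).symm

lemma volume_inter (n K : ℕ) (h1 : n ≤ 2*K) (h2 : 2*K ≤ n+1) :
    volume (Icc (0:ℝ) (2 ^ (-(n:ℤ))) ∩ Eset)
      = ENNReal.ofReal ((2/3) * (2:ℝ) ^ (-(2*(K:ℤ)))) := by
  rw [inter_eq_iUnion n K h1 h2,
    measure_iUnion (pairwise_disjoint_strips K) (fun j => measurableSet_Ioc)]
  simp only [Real.volume_Ioc]
  rw [← ENNReal.ofReal_tsum_of_nonneg (fun j => by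
      have : (2:ℝ) ^ (-(2*((j:ℤ)+K)+1)) ≤ (2:ℝ) ^ (-(2*((j:ℤ)+K))) :=
        zpow_le_zpow_right₀ one_le_two (by omega)
      linarith) (summable_terms K), tsum_terms]

/-- The measure `P`. -/
def Pmeas : Measure (ℝ × ℝ) :=
  (volume.restrict (Icc (0:ℝ) 1)).map (fun x => (x, ff x))

lemma measurable_pairmap : Measurable (fun x : ℝ => (x, ff x)) :=
  measurable_id.prodMk measurable_ff

instance : IsProbabilityMeasure (volume.restrict (Icc (0:ℝ) 1)) := by
  constructor
  rw [Measure.restrict_apply_univ, Real.volume_Icc]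
  norm_num

instance : IsProbabilityMeasure Pmeas :=
  Measure.isProbabilityMeasure_map measurable_pairmap.aemeasurable

lemma Pmeas_fst : Pmeas.map Prod.fst = volume.restrict (Icc (0:ℝ) 1) := by
  unfold Pmeas
  rw [Measure.map_map measurable_fst measurable_pairmap]
  have : (Prod.fst ∘ fun x : ℝ => (x, ff x)) = id := rfl
  rw [this, Measure.map_id]

lemma two_zpow_le_one (n : ℕ) : (2:ℝ) ^ (-(n:ℤ)) ≤ 1 := by
  have := zpow_le_zpow_right₀ (one_le_two (α := ℝ)) (show -(n:ℤ) ≤ 0 by omega)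
  simpa using this

lemma two_zpow_pos (n : ℕ) : (0:ℝ) < (2:ℝ) ^ (-(n:ℤ)) := by positivity

lemma Pmeas_denom (n : ℕ) :
    Pmeas (Icc (0:ℝ) (2 ^ (-(n:ℤ))) ×ˢ Icc (0:ℝ) 1)
      = ENNReal.ofReal ((2:ℝ) ^ (-(n:ℤ))) := by
  unfold Pmeas
  rw [Measure.map_apply measurable_pairmap (measurableSet_Icc.prod measurableSet_Icc)]
  have hpre : (fun x : ℝ => (x, ff x)) ⁻¹' (Icc (0:ℝ) (2 ^ (-(n:ℤ))) ×ˢ Icc (0:ℝ) 1)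
      = Icc (0:ℝ) (2 ^ (-(n:ℤ))) := by
    ext x
    simp only [mem_preimage, mem_prod, mem_Icc]
    exact ⟨fun h => h.1, fun h => ⟨h, (ff_mem_Icc x).1, (ff_mem_Icc x).2⟩⟩
  rw [hpre, Measure.restrict_apply measurableSet_Icc]
  have : Icc (0:ℝ) (2 ^ (-(n:ℤ))) ∩ Icc 0 1 = Icc (0:ℝ) (2 ^ (-(n:ℤ))) := by
    apply inter_eq_left.mpr
    exact Icc_subset_Icc le_rfl (two_zpow_le_one n)
  rw [this, Real.volume_Icc]
  norm_num

lemma Pmeas_num (n K : ℕ) (h1 : n ≤ 2*K) (h2 : 2*K ≤ n+1) :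
    Pmeas (Icc (0:ℝ) (2 ^ (-(n:ℤ))) ×ˢ Icc (1/2 : ℝ) 1)
      = ENNReal.ofReal ((2/3) * (2:ℝ) ^ (-(2*(K:ℤ)))) := by
  unfold Pmeas
  rw [Measure.map_apply measurable_pairmap (measurableSet_Icc.prod measurableSet_Icc)]
  have hpre : (fun x : ℝ => (x, ff x)) ⁻¹' (Icc (0:ℝ) (2 ^ (-(n:ℤ))) ×ˢ Icc (1/2 : ℝ) 1)
      = Icc (0:ℝ) (2 ^ (-(n:ℤ))) ∩ Eset := by
    rw [show (fun x : ℝ => (x, ff x)) ⁻¹' (Icc (0:ℝ) (2 ^ (-(n:ℤ))) ×ˢ Icc (1/2 : ℝ) 1)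
        = Icc (0:ℝ) (2 ^ (-(n:ℤ))) ∩ ff ⁻¹' Icc (1/2:ℝ) 1 from rfl, ff_preimage_upper]
  rw [hpre, Measure.restrict_apply (measurableSet_Icc.inter measurableSet_Eset)]
  have : Icc (0:ℝ) (2 ^ (-(n:ℤ))) ∩ Eset ∩ Icc 0 1
      = Icc (0:ℝ) (2 ^ (-(n:ℤ))) ∩ Eset := by
    apply inter_eq_left.mpr
    exact subset_trans inter_subset_left (Icc_subset_Icc le_rfl (two_zpow_le_one n))
  rw [this, volume_inter n K h1 h2]

lemma ratio_eq (n : ℕ) (hn : 1 ≤ n) :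
    (Pmeas (Icc (0 : ℝ) (2 ^ (-(n : ℤ))) ×ˢ Icc (1 / 2 : ℝ) 1)).toReal /
      (Pmeas (Icc (0 : ℝ) (2 ^ (-(n : ℤ))) ×ˢ Icc (0 : ℝ) 1)).toReal =
    if Even n then 2 / 3 else 1 / 3 := by
  have hd : (Pmeas (Icc (0 : ℝ) (2 ^ (-(n : ℤ))) ×ˢ Icc (0 : ℝ) 1)).toReal
      = (2:ℝ) ^ (-(n:ℤ)) := by
    rw [Pmeas_denom, ENNReal.toReal_ofReal (le_of_lt (two_zpow_pos n))]
  by_cases he : Even n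
  · obtain ⟨m, hm⟩ := he
    have hK1 : n ≤ 2 * m := by omega
    have hK2 : 2 * m ≤ n + 1 := by omega
    rw [Pmeas_num n m hK1 hK2, hd, if_pos ⟨m, hm⟩]
    have h2K : (2 * (m:ℤ)) = (n:ℤ) := by omega
    rw [ENNReal.toReal_ofReal (by positivity), h2K]
    field_simp
  · have hodd : ¬ Even n := he
    have hK1 : n ≤ 2 * ((n+1)/2) := by omega
    have hK2 : 2 * ((n+1)/2) ≤ n + 1 := by omega
    rw [Pmeas_num n ((n+1)/2) hK1 hK2, hd, if_neg hodd]
    have h2K : (2 * (((n+1)/2 : ℕ) : ℤ)) = (n:ℤ) + 1 := by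
      have h : ¬ Even n := hodd
      rw [Nat.not_even_iff] at h
      omega
    rw [ENNReal.toReal_ofReal (by positivity), h2K]
    have h2 : (2:ℝ) ≠ 0 := two_ne_zero
    have : (2:ℝ) ^ (-((n:ℤ) + 1)) = (2:ℝ) ^ (-(n:ℤ)) / 2 := by
      rw [show -((n:ℤ)+1) = -(n:ℤ) - 1 by ring, zpow_sub₀ h2]; norm_num
    rw [this]
    have hp := two_zpow_pos n
    field_simp

end

/-- There is a probability measure on the unit square whose first marginal is
Lebesgue measure, but for which the conditional probabilities of the upper half
over the shrinking intervals `[0, 2^{-n}]` oscillate between `2/3` and `1/3`,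
so the limit does not exist. -/
theorem stmt_4 :
    ∃ P : Measure (ℝ × ℝ), IsProbabilityMeasure P ∧
      P.map Prod.fst = volume.restrict (Icc (0 : ℝ) 1) ∧
      (∀ n : ℕ, 1 ≤ n →
        (P (Icc (0 : ℝ) (2 ^ (-(n : ℤ))) ×ˢ Icc (1 / 2 : ℝ) 1)).toReal /
          (P (Icc (0 : ℝ) (2 ^ (-(n : ℤ))) ×ˢ Icc (0 : ℝ) 1)).toReal =
        if Even n then 2 / 3 else 1 / 3) ∧
      ¬ ∃ L : ℝ, Tendsto (fun n : ℕ =>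
          (P (Icc (0 : ℝ) (2 ^ (-(n : ℤ))) ×ˢ Icc (1 / 2 : ℝ) 1)).toReal /
            (P (Icc (0 : ℝ) (2 ^ (-(n : ℤ))) ×ˢ Icc (0 : ℝ) 1)).toReal)
        atTop (𝓝 L) := by
  refine ⟨Pmeas, inferInstance, Pmeas_fst, fun n hn => ratio_eq n hn, ?_⟩
  rintro ⟨L, hL⟩
  set a : ℕ → ℝ := fun n =>
    (Pmeas (Icc (0 : ℝ) (2 ^ (-(n : ℤ))) ×ˢ Icc (1 / 2 : ℝ) 1)).toReal /
      (Pmeas (Icc (0 : ℝ) (2 ^ (-(n : ℤ))) ×ˢ Icc (0 : ℝ) 1)).toReal with ha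
  have heven : ∀ k : ℕ, a (2 * k + 2) = 2 / 3 := by
    intro k
    rw [ha]
    have := ratio_eq (2 * k + 2) (by omega)
    rwa [if_pos ⟨k + 1, by ring⟩] at this
  have hodd : ∀ k : ℕ, a (2 * k + 1) = 1 / 3 := by
    intro k
    rw [ha]
    have := ratio_eq (2 * k + 1) (by omega)
    rwa [if_neg (by simp [Nat.even_add_one, parity_simps])] at this
  have h1 : Tendsto (fun k : ℕ => a (2 * k + 2)) atTop (𝓝 L) :=
    hL.comp (tendsto_atTop_atTop.2 fun b => ⟨b, fun k hk => by omega⟩)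
  have h2 : Tendsto (fun k : ℕ => a (2 * k + 1)) atTop (𝓝 L) :=
    hL.comp (tendsto_atTop_atTop.2 fun b => ⟨b, fun k hk => by omega⟩)
  rw [show (fun k : ℕ => a (2 * k + 2)) = fun _ => (2/3 : ℝ) from funext heven] at h1
  rw [show (fun k : ℕ => a (2 * k + 1)) = fun _ => (1/3 : ℝ) from funext hodd] at h2
  have e1 : L = 2/3 := tendsto_nhds_unique h1 tendsto_const_nhds
  have e2 : L = 1/3 := tendsto_nhds_unique h2 tendsto_const_nhds
  rw [e1] at e2
  norm_num at e2
end

section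
/- Let P be a probability measure on Ω₁ × Ω₂ with marginal P₁, let U ⊆ Ω₁ × Ω₂ be open, and let α₁ ∈ Ω₁ be such that the conditional measure Q = P(· | α₁) exists as a limit of conditional measures over shrinking cylinders around α₁ (in the sense that Q(J) = lim_n P([α₁↾n] × J)/P₁([α₁↾n]) for every cylinder J ⊆ Ω₂, with all denominators positive, and Q extends to a Borel probability measure). If α₁ is not contained in any n-heavy cylinder (i.e., P(U ∩ ([α₁↾n] × Ω₂)) ≤ 2^{-n} P₁([α₁↾n]) for all n), then Q of the α₁-section {β : (α₁, β) ∈ U} is at most 2^{-n}. -/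
open MeasureTheory Set Filter Topology

abbrev Cantor : Type := ℕ → Bool

def cyl (a : List Bool) : Set Cantor := {ω | ∀ i : Fin a.length, ω i = a.get i}

def pref (ω : Cantor) (n : ℕ) : List Bool := List.ofFn fun i : Fin n => ω i

/-! The section `S = {β | (α₁, β) ∈ U}` is open, hence the increasing union over `L` of the sets
`cylInterior S L`, each a finite union of length-`L` cylinders. For such a set `V`, additivity
turns the convergence on cylinders into convergence of `P([α₁↾m] × V) / P₁([α₁↾m])` to `Q V`;
since `V` is compact, the tube lemma gives `[α₁↾m] × V ⊆ U` for large `m`, so lightness bounds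
these ratios by `2⁻ⁿ` and hence `Q V ≤ 2⁻ⁿ`. Continuity from below finishes. -/

open PiNat ENNReal

theorem eventually_cylinder_subset {E : ℕ → Type*} [∀ n, TopologicalSpace (E n)]
    [∀ n, DiscreteTopology (E n)] {x : ∀ n, E n} {u : Set (∀ n, E n)} (hu : u ∈ 𝓝 x) :
    ∀ᶠ n in atTop, cylinder x n ⊆ u := by
  obtain ⟨_, ⟨y, N, rfl⟩, hx, hsub⟩ := (isTopologicalBasis_cylinders E).mem_nhds_iff.1 hu
  rw [← mem_cylinder_iff_eq.1 hx] at hsub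
  exact eventually_atTop.2 ⟨N, fun n hn => (cylinder_anti x hn).trans hsub⟩

theorem eventually_cylinder_prod_subset {E : ℕ → Type*} [∀ n, TopologicalSpace (E n)]
    [∀ n, DiscreteTopology (E n)] {Y : Type*} [TopologicalSpace Y] {U : Set ((∀ n, E n) × Y)}
    (hU : IsOpen U) {x : ∀ n, E n} {C : Set Y} (hC : IsCompact C) (hxC : {x} ×ˢ C ⊆ U) :
    ∀ᶠ n in atTop, cylinder x n ×ˢ C ⊆ U := by
  obtain ⟨u, v, hu, -, hxu, hCv, huv⟩ := generalized_tube_lemma isCompact_singleton hC hU hxC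
  filter_upwards [eventually_cylinder_subset (hu.mem_nhds (hxu rfl))] with n hn
  exact (prod_mono hn hCv).trans huv

def truncate (L : ℕ) (β : Cantor) : Fin L → Bool := fun i => β i

theorem continuous_truncate (L : ℕ) : Continuous (truncate L) :=
  continuous_pi fun i => continuous_apply (i : ℕ)

theorem measurable_truncate (L : ℕ) : Measurable (truncate L) :=
  measurable_pi_lambda _ fun i => measurable_pi_apply (i : ℕ)

theorem cyl_ofFn {L : ℕ} (σ : Fin L → Bool) : cyl (List.ofFn σ) = truncate L ⁻¹' {σ} := by
  ext β
  simp [cyl, truncate, funext_iff, Fin.forall_iff]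

theorem cyl_pref (β : Cantor) (L : ℕ) : cyl (pref β L) = cylinder β L := by
  ext ω
  simp [cyl, pref, Fin.forall_iff]

def cylInterior (S : Set Cantor) (L : ℕ) : Set Cantor :=
  truncate L ⁻¹' {σ | cyl (List.ofFn σ) ⊆ S}

theorem mem_cylInterior {S : Set Cantor} {L : ℕ} {β : Cantor} :
    β ∈ cylInterior S L ↔ cylinder β L ⊆ S := by
  rw [← cyl_pref]; rfl

theorem cylInterior_subset (S : Set Cantor) (L : ℕ) : cylInterior S L ⊆ S :=
  fun β hβ => mem_cylInterior.1 hβ (self_mem_cylinder β L)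

theorem monotone_cylInterior (S : Set Cantor) : Monotone (cylInterior S) :=
  fun _ _ hLL' _ hβ => mem_cylInterior.2 ((cylinder_anti _ hLL').trans (mem_cylInterior.1 hβ))

theorem iUnion_cylInterior {S : Set Cantor} (hS : IsOpen S) : ⋃ L, cylInterior S L = S := by
  refine (iUnion_subset (cylInterior_subset S)).antisymm fun β hβ => ?_
  obtain ⟨L, hL⟩ := (eventually_cylinder_subset (hS.mem_nhds hβ)).exists
  exact mem_iUnion.2 ⟨L, mem_cylInterior.2 hL⟩

theorem isCompact_cylInterior (S : Set Cantor) (L : ℕ) : IsCompact (cylInterior S L) :=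
  ((isClosed_discrete _).preimage (continuous_truncate L)).isCompact

theorem tendsto_toReal_measure_preimage_div {α X ι : Type*} [MeasurableSpace X]
    [MeasurableSpace ι] [MeasurableSingletonClass ι] [Finite ι] {l : Filter α}
    {μ : α → Measure X} [∀ a, IsFiniteMeasure (μ a)] {ν : Measure X} [IsFiniteMeasure ν]
    {c : α → ℝ} {f : X → ι} (hf : Measurable f)
    (h : ∀ i, Tendsto (fun a => (μ a (f ⁻¹' {i})).toReal / c a) l (𝓝 (ν (f ⁻¹' {i})).toReal))
    (s : Set ι) :
    Tendsto (fun a => (μ a (f ⁻¹' s)).toReal / c a) l (𝓝 (ν (f ⁻¹' s)).toReal) := by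
  obtain ⟨t, rfl⟩ := s.toFinite.exists_finset_coe
  have hsum : ∀ (ρ : Measure X) [IsFiniteMeasure ρ],
      (ρ (f ⁻¹' t)).toReal = ∑ i ∈ t, (ρ (f ⁻¹' {i})).toReal := fun ρ _ => by
    rw [← sum_measure_preimage_singleton t fun i _ => hf (measurableSet_singleton i),
      toReal_sum fun i _ => measure_ne_top ρ _]
  simp_rw [hsum, Finset.sum_div]
  exact tendsto_finsetSum t fun i _ => h i

theorem le_of_tendsto_toReal_div {α : Type*} {l : Filter α} [l.NeBot] {a b : α → ℝ≥0∞}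
    {q r : ℝ≥0∞} (hq : q ≠ ∞) (hr : r ≠ ∞)
    (hlim : Tendsto (fun i => (a i).toReal / (b i).toReal) l (𝓝 q.toReal))
    (hle : ∀ᶠ i in l, a i ≤ r * b i) : q ≤ r := by
  rw [← toReal_le_toReal hq hr]
  refine le_of_tendsto hlim (hle.mono fun i hi => ?_)
  by_cases hb : b i = ∞
  · simp [hb]
  refine div_le_of_le_mul₀ toReal_nonneg toReal_nonneg ?_
  rw [← toReal_mul]
  exact toReal_mono (mul_ne_top hr hb) hi

theorem map_snd_restrict_prod_univ_apply {X Y : Type*} [MeasurableSpace X] [MeasurableSpace Y]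
    (P : Measure (X × Y)) (A : Set X) {B : Set Y} (hB : MeasurableSet B) :
    (P.restrict (A ×ˢ univ)).map Prod.snd B = P (A ×ˢ B) := by
  rw [Measure.map_apply measurable_snd hB, Measure.restrict_apply (measurable_snd hB),
    ← univ_prod, prod_inter_prod, univ_inter, inter_univ]

theorem stmt_7_general (P : Measure (Cantor × Cantor)) [IsProbabilityMeasure P]
    (P1 : Measure Cantor)
    (U : Set (Cantor × Cantor)) (hUopen : IsOpen U)
    (α1 : Cantor)
    (Q : Measure Cantor) [IsProbabilityMeasure Q]
    (hQ : ∀ J : List Bool,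
      Tendsto (fun m : ℕ =>
          (P (cyl (pref α1 m) ×ˢ cyl J)).toReal / (P1 (cyl (pref α1 m))).toReal)
        atTop (𝓝 (Q (cyl J)).toReal))
    (n : ℕ)
    (hlight : ∀ m : ℕ,
      P (U ∩ (cyl (pref α1 m) ×ˢ (univ : Set Cantor))) ≤
        2⁻¹ ^ n * P1 (cyl (pref α1 m))) :
    Q {β : Cantor | (α1, β) ∈ U} ≤ 2⁻¹ ^ n := by
  set S := {β : Cantor | (α1, β) ∈ U}
  have hS : IsOpen S := hUopen.preimage (Continuous.prodMk_right α1)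
  let ν : ℕ → Measure Cantor := fun m => (P.restrict (cyl (pref α1 m) ×ˢ univ)).map Prod.snd
  have hν : ∀ m {B}, MeasurableSet B → ν m B = P (cyl (pref α1 m) ×ˢ B) :=
    fun m _ hB => map_snd_restrict_prod_univ_apply P _ hB
  rw [← iUnion_cylInterior hS, (monotone_cylInterior S).measure_iUnion]
  refine iSup_le fun L => ?_
  have hlim : Tendsto (fun m => (P (cyl (pref α1 m) ×ˢ cylInterior S L)).toReal /
      (P1 (cyl (pref α1 m))).toReal) atTop (𝓝 (Q (cylInterior S L)).toReal) := by
    simp only [← hν _ (isCompact_cylInterior S L).isClosed.measurableSet]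
    refine tendsto_toReal_measure_preimage_div (measurable_truncate L) (fun σ => ?_) _
    simp only [hν _ (measurable_truncate L (measurableSet_singleton σ))]
    rw [← cyl_ofFn]
    exact hQ _
  have hle : ∀ᶠ m in atTop,
      P (cyl (pref α1 m) ×ˢ cylInterior S L) ≤ 2⁻¹ ^ n * P1 (cyl (pref α1 m)) := by
    have hsection : {α1} ×ˢ cylInterior S L ⊆ U := by
      rintro ⟨a, b⟩ ⟨rfl : a = α1, hb⟩
      exact cylInterior_subset S L hb
    filter_upwards [eventually_cylinder_prod_subset hUopen (isCompact_cylInterior S L)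
      hsection] with m hm
    rw [← cyl_pref] at hm
    exact (measure_mono (subset_inter hm (prod_mono_right (subset_univ _)))).trans (hlight m)
  exact le_of_tendsto_toReal_div (measure_ne_top Q _) (by simp) hlim hle

/-- Section lemma: if no prefix cylinder of `α₁` is `n`-heavy for the open set
`U`, then the conditional measure of the `α₁`-section of `U` is at most
`2^{-n}`. -/
theorem stmt_7 (P : Measure (Cantor × Cantor)) [IsProbabilityMeasure P]
    (P1 : Measure Cantor) (hP1 : P1 = P.map Prod.fst)
    (U : Set (Cantor × Cantor)) (hUopen : IsOpen U)
    (α1 : Cantor) (hpos : ∀ m : ℕ, 0 < P1 (cyl (pref α1 m)))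
    (Q : Measure Cantor) [IsProbabilityMeasure Q]
    (hQ : ∀ J : List Bool,
      Tendsto (fun m : ℕ =>
          (P (cyl (pref α1 m) ×ˢ cyl J)).toReal / (P1 (cyl (pref α1 m))).toReal)
        atTop (𝓝 (Q (cyl J)).toReal))
    (n : ℕ)
    (hlight : ∀ m : ℕ,
      P (U ∩ (cyl (pref α1 m) ×ˢ (univ : Set Cantor))) ≤
        2⁻¹ ^ n * P1 (cyl (pref α1 m))) :
    Q {β : Cantor | (α1, β) ∈ U} ≤ 2⁻¹ ^ n :=
  stmt_7_general P P1 U hUopen α1 Q hQ n hlight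
end

section
/- Let P be a probability measure on Ω₁ × Ω₂ with marginal P₁, let S = I × Ω₂ be a stripe with P₁(I) > 0, and define the vertical size v(U | S) = P(U ∩ S)/P(S) for measurable U. Let S' = I' × Ω₂ with I' ⊆ I, P₁(I') > 0, and suppose U₁ ⊆ U₂ are measurable sets with v(U₁ | S) ≤ ε, v(U₂ | S') ≤ ε for each S' in a disjoint family {S'ⱼ} of substripes of S, and |v(U₁ | S) − v(U₁ | S'ⱼ)| ≤ 2δ for each j. Then P((U₁ ∩ (S \ ⋃ⱼ S'ⱼ)) ∪ ⋃ⱼ (U₂ ∩ S'ⱼ)) ≤ (ε + 2δ) · P(S). -/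
open MeasureTheory Set

/-- The (average) vertical size of `U` in a stripe `S`. -/
noncomputable def vsize (P : Measure (Cantor × Cantor))
    (U S : Set (Cantor × Cantor)) : ℝ :=
  (P (U ∩ S)).toReal / (P S).toReal

/-!
Write `T = ⋃ⱼ S'ⱼ`, `s = P(S)`, `t = P(T) ≤ s` and `v = v(U₁ | S) ≤ ε`. On each `S'ⱼ` the set `U₁`
has measure at least `(v - 2δ) P(S'ⱼ)` and `U₂` at most `ε P(S'ⱼ)`; summing over the disjoint
substripes, trading `U₁ ∩ T` for `U₂ ∩ T` adds at most `(ε - v + 2δ) t`, so the new set has measure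
at most `v s + (ε - v + 2δ) t ≤ (ε + 2δ) s`.
-/

theorem measurableSet_cyl (a : List Bool) : MeasurableSet (cyl a) := by
  have h : cyl a = ⋂ i : Fin a.length, (fun ω : Cantor => ω i) ⁻¹' {a.get i} := by
    ext ω; simp [cyl]
  rw [h]
  exact MeasurableSet.iInter fun i => measurable_pi_apply _ (measurableSet_singleton _)

-- Also true when `P S = 0`: then `vsize P U S = 0` by the convention `x / 0 = 0`.
theorem measureReal_inter_eq_vsize_mul (P : Measure (Cantor × Cantor)) [IsFiniteMeasure P]
    (U S : Set (Cantor × Cantor)) : P.real (U ∩ S) = vsize P U S * P.real S := by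
  rcases eq_or_ne (P.real S) 0 with hS | hS
  · rw [hS, mul_zero]
    exact measureReal_mono_null inter_subset_right hS
  · exact (div_mul_cancel₀ _ hS).symm

theorem measureReal_inter_le_of_vsize_le {P : Measure (Cantor × Cantor)} [IsFiniteMeasure P]
    {U S : Set (Cantor × Cantor)} {c : ℝ} (h : vsize P U S ≤ c) :
    P.real (U ∩ S) ≤ c * P.real S := by
  rw [measureReal_inter_eq_vsize_mul]
  exact mul_le_mul_of_nonneg_right h measureReal_nonneg

theorem le_measureReal_inter_of_le_vsize {P : Measure (Cantor × Cantor)} [IsFiniteMeasure P]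
    {U S : Set (Cantor × Cantor)} {c : ℝ} (h : c ≤ vsize P U S) :
    c * P.real S ≤ P.real (U ∩ S) := by
  rw [measureReal_inter_eq_vsize_mul]
  exact mul_le_mul_of_nonneg_right h measureReal_nonneg

open Function

namespace MeasureTheory

variable {α ι : Type*} [MeasurableSpace α] {μ : Measure α} [IsFiniteMeasure μ] [Countable ι]
  {s : ι → Set α}

-- `A` need not be measurable: measurable pieces split every set additively.
theorem hasSum_measureReal_inter_iUnion (hd : Pairwise (Disjoint on s))
    (hm : ∀ i, MeasurableSet (s i)) (A : Set α) :
    HasSum (fun i => μ.real (A ∩ s i)) (μ.real (A ∩ ⋃ i, s i)) := by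
  have h : μ (A ∩ ⋃ i, s i) = ∑' i, μ (A ∩ s i) := by
    rw [← Measure.restrict_apply' (MeasurableSet.iUnion hm), Measure.restrict_iUnion hd hm,
      Measure.sum_apply_of_countable]
    simp only [Measure.restrict_apply' (hm _)]
  have hfin : ∑' i, μ (A ∩ s i) ≠ ⊤ := h ▸ measure_ne_top _ _
  rw [measureReal_def, h, ENNReal.tsum_toReal_eq fun _ => measure_ne_top _ _]
  exact (ENNReal.summable_toReal hfin).hasSum

theorem mul_measureReal_iUnion_le_inter {A : Set α} {c : ℝ} (hd : Pairwise (Disjoint on s))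
    (hm : ∀ i, MeasurableSet (s i)) (hc : ∀ i, c * μ.real (s i) ≤ μ.real (A ∩ s i)) :
    c * μ.real (⋃ i, s i) ≤ μ.real (A ∩ ⋃ i, s i) := by
  have hs := (hasSum_measureReal_inter_iUnion (μ := μ) hd hm univ).mul_left c
  simp only [univ_inter] at hs
  exact hasSum_le hc hs (hasSum_measureReal_inter_iUnion hd hm A)

theorem measureReal_inter_iUnion_le_mul {A : Set α} {c : ℝ} (hd : Pairwise (Disjoint on s))
    (hm : ∀ i, MeasurableSet (s i)) (hc : ∀ i, μ.real (A ∩ s i) ≤ c * μ.real (s i)) :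
    μ.real (A ∩ ⋃ i, s i) ≤ c * μ.real (⋃ i, s i) := by
  have hs := (hasSum_measureReal_inter_iUnion (μ := μ) hd hm univ).mul_left c
  simp only [univ_inter] at hs
  exact hasSum_le hc (hasSum_measureReal_inter_iUnion hd hm A) hs

theorem measureReal_inter_sdiff_union_inter_le {S T U₁ U₂ : Set α} {v ε δ : ℝ}
    (hT : MeasurableSet T) (hTS : T ⊆ S) (hv : v ≤ ε) (hδ : 0 ≤ δ)
    (hU₁S : μ.real (U₁ ∩ S) ≤ v * μ.real S)
    (hU₁T : (v - 2 * δ) * μ.real T ≤ μ.real (U₁ ∩ T))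
    (hU₂T : μ.real (U₂ ∩ T) ≤ ε * μ.real T) :
    μ.real (U₁ ∩ (S \ T) ∪ U₂ ∩ T) ≤ (ε + 2 * δ) * μ.real S := by
  have hsplit : μ.real (U₁ ∩ T) + μ.real (U₁ ∩ (S \ T)) = μ.real (U₁ ∩ S) := by
    rw [← measureReal_inter_add_sdiff (s := U₁ ∩ S) hT, inter_assoc, inter_eq_right.mpr hTS,
      inter_sdiff_assoc]
  have hTleS : μ.real T ≤ μ.real S := measureReal_mono hTS
  have h₁ : 0 ≤ (ε - v) * (μ.real S - μ.real T) := mul_nonneg (by linarith) (by linarith)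
  have h₂ : 0 ≤ δ * (μ.real S - μ.real T) := mul_nonneg hδ (by linarith)
  calc μ.real (U₁ ∩ (S \ T) ∪ U₂ ∩ T)
      ≤ μ.real (U₁ ∩ (S \ T)) + μ.real (U₂ ∩ T) := measureReal_union_le _ _
    _ ≤ (ε + 2 * δ) * μ.real S := by linarith

end MeasureTheory

theorem stmt_10_general (P : Measure (Cantor × Cantor)) [IsProbabilityMeasure P]
    (I : List Bool) (I' : ℕ → List Bool)
    (hsub : ∀ j, cyl (I' j) ⊆ cyl I)
    (hdisj : Pairwise fun i j => Disjoint (cyl (I' i)) (cyl (I' j)))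
    (U1 U2 : Set (Cantor × Cantor)) (ε δ : ℝ) (hδ : 0 ≤ δ)
    (hv1 : vsize P U1 (cyl I ×ˢ (univ : Set Cantor)) ≤ ε)
    (hv2 : ∀ j, vsize P U2 (cyl (I' j) ×ˢ (univ : Set Cantor)) ≤ ε)
    (hclose : ∀ j,
      |vsize P U1 (cyl I ×ˢ (univ : Set Cantor)) -
        vsize P U1 (cyl (I' j) ×ˢ (univ : Set Cantor))| ≤ 2 * δ) :
    P ((U1 ∩ ((cyl I ×ˢ (univ : Set Cantor)) \
          ⋃ j : ℕ, cyl (I' j) ×ˢ (univ : Set Cantor))) ∪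
        ⋃ j : ℕ, U2 ∩ (cyl (I' j) ×ˢ (univ : Set Cantor))) ≤
      ENNReal.ofReal ((ε + 2 * δ) *
        (P (cyl I ×ˢ (univ : Set Cantor))).toReal) := by
  set S := cyl I ×ˢ (univ : Set Cantor)
  set S' : ℕ → Set (Cantor × Cantor) := fun j => cyl (I' j) ×ˢ univ
  have hd : Pairwise (Disjoint on S') := fun i j hij => disjoint_prod.mpr (Or.inl (hdisj hij))
  have hm : ∀ j, MeasurableSet (S' j) := fun j => (measurableSet_cyl _).prod .univ
  rw [← inter_iUnion, ← ofReal_measureReal]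
  refine ENNReal.ofReal_le_ofReal (measureReal_inter_sdiff_union_inter_le (.iUnion hm)
    (iUnion_subset fun j => prod_mono (hsub j) subset_rfl) hv1 hδ
    (measureReal_inter_eq_vsize_mul P U1 S).le ?_ ?_)
  · exact mul_measureReal_iUnion_le_inter hd hm fun j =>
      le_measureReal_inter_of_le_vsize (by linarith [(abs_le.mp (hclose j)).2])
  · exact measureReal_inter_iUnion_le_mul hd hm fun j => measureReal_inter_le_of_vsize_le (hv2 j)

/-- Key estimate of the trimming construction (Lemma 6): replacing `U₁` by
`U₂` inside a disjoint family of good substripes increases the measure by at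
most `(ε + 2δ)·P(S)`. -/
theorem stmt_10 (P : Measure (Cantor × Cantor)) [IsProbabilityMeasure P]
    (P1 : Measure Cantor) (hP1 : P1 = P.map Prod.fst)
    (I : List Bool) (hI : 0 < P1 (cyl I))
    (I' : ℕ → List Bool) (hI' : ∀ j, 0 < P1 (cyl (I' j)))
    (hsub : ∀ j, cyl (I' j) ⊆ cyl I)
    (hdisj : Pairwise fun i j => Disjoint (cyl (I' i)) (cyl (I' j)))
    (U1 U2 : Set (Cantor × Cantor)) (hU1 : MeasurableSet U1)
    (hU2 : MeasurableSet U2) (hU12 : U1 ⊆ U2)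
    (ε δ : ℝ) (hε : 0 ≤ ε) (hδ : 0 ≤ δ)
    (hv1 : vsize P U1 (cyl I ×ˢ (univ : Set Cantor)) ≤ ε)
    (hv2 : ∀ j, vsize P U2 (cyl (I' j) ×ˢ (univ : Set Cantor)) ≤ ε)
    (hclose : ∀ j,
      |vsize P U1 (cyl I ×ˢ (univ : Set Cantor)) -
        vsize P U1 (cyl (I' j) ×ˢ (univ : Set Cantor))| ≤ 2 * δ) :
    P ((U1 ∩ ((cyl I ×ˢ (univ : Set Cantor)) \
          ⋃ j : ℕ, cyl (I' j) ×ˢ (univ : Set Cantor))) ∪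
        ⋃ j : ℕ, U2 ∩ (cyl (I' j) ×ˢ (univ : Set Cantor))) ≤
      ENNReal.ofReal ((ε + 2 * δ) *
        (P (cyl I ×ˢ (univ : Set Cantor))).toReal) :=
  stmt_10_general P I I' hsub hdisj U1 U2 ε δ hδ hv1 hv2 hclose
end
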